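/- Let P ⊂ ℝⁿ be a lattice polytope of dimension n and let π : ℝⁿ → ℝʳ be a lattice projection. Let Γ' ⊂ ℕ × ℤʳ be the image of Γ_P under id_ℕ × π. Then the saturation of Γ' equals Γ_{π(P)}: {γ ∈ ℕ × ℤʳ : m·γ ∈ Γ' for some positive integer m} = Σ({1} × π(P)) ∩ (ℕ × ℤʳ). -/

import Mathlib

open Set Function

noncomputable section

/-- The real vector with the same coordinates as an integer vector. -/
def toRealVec {n : ℕ} (u : Fin n → ℤ) : Fin n → ℝ := fun i => (u i : ℝ)

/-- A lattice polytope in `ℝⁿ` is the convex hull of finitely many points of `ℤⁿ`. -/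
def IsLatticePolytope {n : ℕ} (P : Set (Fin n → ℝ)) : Prop :=
  ∃ S : Finset (Fin n → ℤ), S.Nonempty ∧ P = convexHull ℝ (↑(S.image toRealVec))

/-- `Σ(S)`: the closed convex cone spanned by a subset `S` of a real vector space,
i.e. the closure of the set of all nonnegative multiples of convex combinations of
points of `S`. -/
def coneSpan {E : Type*} [AddCommGroup E] [Module ℝ E] [TopologicalSpace E]
    (S : Set E) : Set E :=
  closure {x | ∃ t : ℝ, 0 ≤ t ∧ ∃ y ∈ convexHull ℝ S, x = t • y}

/-- The real point of `ℝ × ℝⁿ` corresponding to a point of `ℤ × ℤⁿ`. -/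
def liftReal {n : ℕ} (γ : ℤ × (Fin n → ℤ)) : ℝ × (Fin n → ℝ) :=
  ((γ.1 : ℝ), toRealVec γ.2)

/-- `Γ_P = Σ({1} × P) ∩ (ℕ × ℤⁿ)`, realized as the set of `γ ∈ ℤ × ℤⁿ` with
nonnegative first coordinate whose real lift lies in the cone `Σ({1} × P)`. -/
def GammaP {n : ℕ} (P : Set (Fin n → ℝ)) : Set (ℤ × (Fin n → ℤ)) :=
  {γ | 0 ≤ γ.1 ∧ liftReal γ ∈ coneSpan (({1} : Set ℝ) ×ˢ P)}


/-- The `ℝ`-linear map `ℝⁿ → ℝᵐ` induced by an integer matrix. -/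
def realMap {m n : ℕ} (A : Matrix (Fin m) (Fin n) ℤ) : (Fin n → ℝ) → (Fin m → ℝ) :=
  fun x => (A.map (fun z : ℤ => (z : ℝ))).mulVec x

/-!
The inclusion `⊆` is linearity of `π`. Conversely, let `(a, v) ∈ Γ_{π(P)}` with `a > 0` and
`P = conv S`. The rational point `v / a` lies in `conv π(S)`; by Carathéodory it is a convex
combination of affinely independent points of `π(S)`, whose weights are then unique and hence
rational. Clearing denominators writes some `D • (a, v)` as an `ℕ`-combination of the points
`(1, π s)`, the image of the same combination of the points `(1, s) ∈ Γ_P`.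
-/

open scoped Pointwise

theorem AffineIndependent.exists_algebraMap_eq_of_sum_smul_eq {K L ι κ : Type*} [Field K]
    [Field L] [Algebra K L] [Fintype ι] {p : ι → κ → K}
    (hp : AffineIndependent L fun i => algebraMap K L ∘ p i) {w : ι → L} (hw : ∑ i, w i = 1)
    {c : κ → K} (hc : ∑ i, w i • (algebraMap K L ∘ p i) = algebraMap K L ∘ c) :
    ∃ μ : ι → K, ∀ i, algebraMap K L (μ i) = w i := by
  -- a `K`-linear retraction `φ` of `algebraMap` turns `w` into `K`-weights with the same affine
  -- combination `c`, and affine independence forces them to agree with `w`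
  obtain ⟨φ, hφ⟩ := (Algebra.linearMap K L).exists_leftInverse_of_injective
    (LinearMap.ker_eq_bot.mpr (algebraMap K L).injective)
  have hφ_alg (x : K) : φ (algebraMap K L x) = x := LinearMap.congr_fun hφ x
  set w' : ι → L := fun i => algebraMap K L (φ (w i))
  have hw' : ∑ i, w' i = 1 := by
    rw [← map_sum, ← map_sum, hw, ← map_one (algebraMap K L), hφ_alg, map_one]
  have hcoord (k : κ) : ∑ i, φ (w i) * p i k = c k := by
    have : ∑ i, w i * algebraMap K L (p i k) = algebraMap K L (c k) := by
      simpa using congrFun hc k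
    rw [← hφ_alg (c k), ← this, map_sum]
    refine Finset.sum_congr rfl fun i _ => ?_
    rw [mul_comm (w i), ← Algebra.smul_def, map_smul, smul_eq_mul, mul_comm]
  have hc' : ∑ i, w' i • (algebraMap K L ∘ p i) = algebraMap K L ∘ c := by
    funext k
    simpa [w', Algebra.smul_def, ← map_mul, ← map_sum, mul_comm] using
      congrArg (algebraMap K L) (hcoord k)
  refine ⟨fun i => φ (w i), congrFun ((affineIndependent_iff_eq_of_fintype_affineCombination_eq
    L _).mp hp w' w hw' hw ?_)⟩
  rw [Finset.affineCombination_eq_linear_combination _ _ _ hw,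
    Finset.affineCombination_eq_linear_combination _ _ _ hw', hc, hc']

theorem mem_convexHull_of_algebraMap_mem_convexHull {L κ : Type*} [Field L] [LinearOrder L]
    [IsStrictOrderedRing L] {s : Set (κ → ℚ)} {c : κ → ℚ}
    (hc : algebraMap ℚ L ∘ c ∈ convexHull L ((algebraMap ℚ L ∘ ·) '' s)) :
    c ∈ convexHull ℚ s := by
  obtain ⟨ι, _, z, w, hzs, hz, hw0, hw1, hwz⟩ := eq_pos_convex_span_of_mem_convexHull hc
  have hlift (i : ι) : ∃ q ∈ s, algebraMap ℚ L ∘ q = z i := hzs (mem_range_self i)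
  choose q hqs hqz using hlift
  obtain rfl : z = fun i => algebraMap ℚ L ∘ q i := funext fun i => (hqz i).symm
  obtain ⟨μ, hμ⟩ := hz.exists_algebraMap_eq_of_sum_smul_eq hw1 hwz
  refine mem_convexHull_of_exists_fintype μ q (fun i => ?_) ?_ hqs
    ((algebraMap ℚ L).injective.comp_left ?_)
  · have := (hw0 i).le
    rwa [← hμ i, eq_ratCast, Rat.cast_nonneg] at this
  · apply (algebraMap ℚ L).injective
    rw [map_sum, map_one, Finset.sum_congr rfl fun i _ => hμ i, hw1]
  · show algebraMap ℚ L ∘ _ = algebraMap ℚ L ∘ c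
    rw [← hwz]
    funext j
    simp [← hμ]

theorem exists_nat_mul_eq_natCast_of_nonneg {ι : Type*} [Fintype ι] {μ : ι → ℚ}
    (hμ : ∀ i, 0 ≤ μ i) : ∃ D : ℕ, 0 < D ∧ ∀ i, ∃ k : ℕ, (k : ℚ) = D * μ i := by
  classical
  refine ⟨∏ i, (μ i).den, Finset.prod_pos fun i _ => (μ i).pos, fun i => ?_⟩
  refine ⟨(∏ j ∈ Finset.univ.erase i, (μ j).den) * (μ i).num.toNat, ?_⟩
  rw [← Finset.prod_erase_mul _ _ (Finset.mem_univ i)]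
  have hnum : ((μ i).num.toNat : ℚ) = (μ i).num := by
    exact_mod_cast Int.toNat_of_nonneg (Rat.num_nonneg.mpr (hμ i))
  push_cast
  rw [hnum, mul_assoc, Rat.den_mul_eq_num]

section Cone

variable {E : Type*} [AddCommGroup E] [Module ℝ E] [TopologicalSpace E]

theorem isClosed_setOf_mem_smul_of_isCompact [T2Space E] [ContinuousSMul ℝ E] {Q : Set E}
    (hQ : IsCompact Q) : IsClosed {z : ℝ × E | 0 ≤ z.1 ∧ z.2 ∈ z.1 • Q} := by
  have : CompactSpace Q := isCompact_iff_compactSpace.mp hQ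
  have hclosed : IsClosed {p : (ℝ × E) × Q | 0 ≤ p.1.1 ∧ p.1.1 • (p.2 : E) = p.1.2} :=
    (isClosed_le continuous_const (continuous_fst.comp continuous_fst)).inter
      (isClosed_eq ((continuous_fst.comp continuous_fst).smul
        (continuous_subtype_val.comp continuous_snd)) (continuous_snd.comp continuous_fst))
  convert isClosedMap_fst_of_compactSpace _ hclosed using 1
  ext z
  simp [mem_smul_set]

theorem mem_coneSpan_singleton_prod_iff [T2Space E] [ContinuousSMul ℝ E] {Q : Set E}
    (hQ : IsCompact Q) (hQc : Convex ℝ Q) {z : ℝ × E} :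
    z ∈ coneSpan ({1} ×ˢ Q) ↔ 0 ≤ z.1 ∧ z.2 ∈ z.1 • Q := by
  have hcone : {x | ∃ t : ℝ, 0 ≤ t ∧ ∃ y ∈ convexHull ℝ ({1} ×ˢ Q), x = t • y} =
      {z : ℝ × E | 0 ≤ z.1 ∧ z.2 ∈ z.1 • Q} := by
    rw [convexHull_prod, convexHull_singleton, hQc.convexHull_eq]
    ext ⟨s, x⟩
    simp [mem_smul_set, eq_comm]
  rw [coneSpan, hcone, (isClosed_setOf_mem_smul_of_isCompact hQ).closure_eq]
  rfl

end Cone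

theorem realMap_eq_mulVecLin {m n : ℕ} (A : Matrix (Fin m) (Fin n) ℤ) :
    realMap A = ⇑(A.map ((↑) : ℤ → ℝ)).mulVecLin := rfl

theorem toRealVec_injective {n : ℕ} : Injective (toRealVec (n := n)) := fun _ _ h =>
  funext fun i => Int.cast_injective (congrFun h i)

theorem toRealVec_eq_compLeft {n : ℕ} :
    toRealVec (n := n) = ⇑((Int.castAddHom ℝ).compLeft (Fin n)) := rfl

theorem toRealVec_zsmul {n : ℕ} (z : ℤ) (u : Fin n → ℤ) :
    toRealVec (z • u) = (z : ℝ) • toRealVec u := by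
  funext i
  simp [toRealVec]

theorem algebraMap_comp_intCast_eq_toRealVec {n : ℕ} (u : Fin n → ℤ) :
    (algebraMap ℚ ℝ ∘ fun j => (u j : ℚ)) = toRealVec u := by
  funext j
  simp [toRealVec]

theorem realMap_toRealVec {m n : ℕ} (A : Matrix (Fin m) (Fin n) ℤ) (u : Fin n → ℤ) :
    realMap A (toRealVec u) = toRealVec (A.mulVec u) := by
  funext i
  simp [realMap, toRealVec, Matrix.mulVec, dotProduct]

theorem mem_GammaP_iff {n : ℕ} {Q : Set (Fin n → ℝ)} (hQ : IsCompact Q) (hQc : Convex ℝ Q)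
    {γ : ℤ × (Fin n → ℤ)} : γ ∈ GammaP Q ↔ 0 ≤ γ.1 ∧ toRealVec γ.2 ∈ (γ.1 : ℝ) • Q := by
  rw [GammaP, mem_ofPred_eq, mem_coneSpan_singleton_prod_iff hQ hQc, liftReal,
    Int.cast_nonneg_iff, and_self_left]

theorem add_mem_GammaP {n : ℕ} {Q : Set (Fin n → ℝ)} (hQ : IsCompact Q) (hQc : Convex ℝ Q)
    {γ δ : ℤ × (Fin n → ℤ)} (hγ : γ ∈ GammaP Q) (hδ : δ ∈ GammaP Q) : γ + δ ∈ GammaP Q := by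
  rw [mem_GammaP_iff hQ hQc] at hγ hδ ⊢
  refine ⟨add_nonneg hγ.1 hδ.1, ?_⟩
  rw [Prod.fst_add, Int.cast_add, hQc.add_smul (Int.cast_nonneg hγ.1) (Int.cast_nonneg hδ.1),
    Prod.snd_add, toRealVec_eq_compLeft, map_add]
  exact add_mem_add hγ.2 hδ.2

theorem closure_subset_GammaP {n : ℕ} {Q : Set (Fin n → ℝ)} (hQ : IsCompact Q) (hQc : Convex ℝ Q)
    (hQne : Q.Nonempty) {T : Set (Fin n → ℤ)} (hT : ∀ t ∈ T, toRealVec t ∈ Q) :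
    (AddSubmonoid.closure ((fun t => ((1 : ℤ), t)) '' T) : Set (ℤ × (Fin n → ℤ))) ⊆
      GammaP Q := by
  intro γ hγ
  induction hγ using AddSubmonoid.closure_induction with
  | mem γ hγ =>
    obtain ⟨t, ht, rfl⟩ := hγ
    rw [mem_GammaP_iff hQ hQc]
    simpa using hT t ht
  | zero =>
    rw [mem_GammaP_iff hQ hQc]
    simp [zero_smul_set hQne, toRealVec_eq_compLeft]
  | add γ δ _ _ hγ hδ => exact add_mem_GammaP hQ hQc hγ hδ

theorem mem_GammaP_realMap_image {m n : ℕ} {Q : Set (Fin n → ℝ)} (hQ : IsCompact Q)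
    (hQc : Convex ℝ Q) (A : Matrix (Fin m) (Fin n) ℤ) {γ : ℤ × (Fin m → ℤ)}
    {δ : ℤ × (Fin n → ℤ)} (hδ : δ ∈ GammaP Q) {k : ℕ} (hk : 0 < k)
    (hδγ : (δ.1, A.mulVec δ.2) = (k : ℤ) • γ) : γ ∈ GammaP (realMap A '' Q) := by
  have hAQ : IsCompact (realMap A '' Q) :=
    hQ.image (A.map ((↑) : ℤ → ℝ)).mulVecLin.continuous_of_finiteDimensional
  have hAQc : Convex ℝ (realMap A '' Q) := hQc.linear_image (A.map ((↑) : ℤ → ℝ)).mulVecLin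
  rw [mem_GammaP_iff hQ hQc] at hδ
  rw [mem_GammaP_iff hAQ hAQc]
  obtain ⟨h1, h2⟩ := Prod.ext_iff.mp hδγ
  simp only [Prod.smul_fst, Prod.smul_snd, smul_eq_mul] at h1 h2
  refine ⟨nonneg_of_mul_nonneg_right (h1 ▸ hδ.1) (by exact_mod_cast hk), ?_⟩
  have hkγ : (k : ℝ) • toRealVec γ.2 ∈ (k : ℝ) • ((γ.1 : ℝ) • realMap A '' Q) := by
    rw [smul_smul, realMap_eq_mulVecLin, ← image_smul_set, ← realMap_eq_mulVecLin]
    refine ⟨toRealVec δ.2, by simpa [h1] using hδ.2, ?_⟩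
    rw [realMap_toRealVec, h2, toRealVec_zsmul, Int.cast_natCast]
  exact (smul_mem_smul_set_iff₀ (by positivity) _ _).mp hkγ

namespace IsLatticePolytope

variable {n : ℕ} {P : Set (Fin n → ℝ)}

protected theorem isCompact (hP : IsLatticePolytope P) : IsCompact P := by
  obtain ⟨S, -, rfl⟩ := hP
  exact (S.image toRealVec).finite_toSet.isCompact_convexHull (𝕜 := ℝ)

protected theorem convex (hP : IsLatticePolytope P) : Convex ℝ P := by
  obtain ⟨S, -, rfl⟩ := hP
  exact convex_convexHull ℝ _

end IsLatticePolytope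

theorem realMap_image_convexHull {m n : ℕ} (A : Matrix (Fin m) (Fin n) ℤ) (S : Finset (Fin n → ℤ)) :
    realMap A '' convexHull ℝ ↑(S.image toRealVec) =
      convexHull ℝ ↑((S.image A.mulVec).image toRealVec) := by
  rw [realMap_eq_mulVecLin, LinearMap.image_convexHull, ← realMap_eq_mulVecLin]
  simp only [Finset.coe_image, image_image, realMap_toRealVec]

theorem closure_image_mulVec_subset_image_GammaP {m n : ℕ} (A : Matrix (Fin m) (Fin n) ℤ)
    {S : Finset (Fin n → ℤ)} (hS : S.Nonempty) :
    ((AddSubmonoid.closure ((fun t => ((1 : ℤ), t)) '' ↑(S.image A.mulVec)) :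
        AddSubmonoid (ℤ × (Fin m → ℤ))) : Set (ℤ × (Fin m → ℤ))) ⊆
      (fun γ : ℤ × (Fin n → ℤ) => (γ.1, A.mulVec γ.2)) ''
        GammaP (convexHull ℝ ↑(S.image toRealVec)) := by
  let F : ℤ × (Fin n → ℤ) →+ ℤ × (Fin m → ℤ) :=
    (AddMonoidHom.id ℤ).prodMap A.mulVecLin.toAddMonoidHom
  have hgen : (fun t => ((1 : ℤ), t)) '' ↑(S.image A.mulVec) =
      F '' ((fun s => ((1 : ℤ), s)) '' ↑S) := by
    simp [F, image_image]
  rw [hgen, ← AddMonoidHom.map_mclosure, AddSubmonoid.coe_map]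
  refine image_mono (closure_subset_GammaP
    ((S.image toRealVec).finite_toSet.isCompact_convexHull (𝕜 := ℝ)) (convex_convexHull ℝ _)
    (convexHull_nonempty_iff.mpr (hS.image toRealVec).to_set) fun s hs => ?_)
  exact subset_convexHull ℝ _ (Finset.mem_coe.mpr (Finset.mem_image_of_mem _ hs))

theorem nsmul_mk_eq_sum_of_natCast_eq_mul {r : ℕ} {ι : Type*} [Fintype ι] {μ : ι → ℚ}
    (hμ1 : ∑ i, μ i = 1) {t : ι → Fin r → ℤ} {a D : ℕ} {v : Fin r → ℤ}
    (hv : ∀ j, (a : ℚ) * ∑ i, μ i * t i j = v j) {k : ι → ℕ} (hk : ∀ i, (k i : ℚ) = D * μ i) :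
    D • ((a : ℤ), v) = ∑ i, (a * k i) • ((1 : ℤ), t i) := by
  ext j
  · simp only [Prod.smul_fst, Prod.fst_sum]
    simp only [nsmul_eq_mul, mul_one]
    have : (D : ℚ) * a = ∑ i, (a : ℚ) * k i := by
      simp only [hk, mul_left_comm _ (D : ℚ), ← Finset.mul_sum, hμ1]
      ring
    exact_mod_cast this
  · simp only [Prod.smul_snd, Prod.snd_sum, Finset.sum_apply, Pi.smul_apply]
    simp only [nsmul_eq_mul]
    have : (D : ℚ) * v j = ∑ i, (a : ℚ) * k i * t i j := by
      simp only [hk, ← hv j, Finset.mul_sum]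
      exact Finset.sum_congr rfl fun i _ => by ring
    exact_mod_cast this

theorem exists_nsmul_mem_closure_of_mem_GammaP {r : ℕ} {T : Finset (Fin r → ℤ)}
    {γ : ℤ × (Fin r → ℤ)} (hγ : γ ∈ GammaP (convexHull ℝ ↑(T.image toRealVec))) :
    ∃ k : ℕ, 0 < k ∧ k • γ ∈ AddSubmonoid.closure ((fun t => ((1 : ℤ), t)) '' ↑T) := by
  obtain ⟨a, v⟩ := γ
  rw [mem_GammaP_iff ((T.image toRealVec).finite_toSet.isCompact_convexHull (𝕜 := ℝ))
    (convex_convexHull ℝ _)] at hγ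
  obtain ⟨ha, hv⟩ := hγ
  lift a to ℕ using ha
  rcases a.eq_zero_or_pos with rfl | ha
  · refine ⟨1, one_pos, ?_⟩
    simp only [Nat.cast_zero, Int.cast_zero] at hv
    have hv0 : v = 0 := toRealVec_injective <| by
      simpa [toRealVec_eq_compLeft] using zero_smul_set_subset _ hv
    rw [hv0, one_smul, Nat.cast_zero]
    exact zero_mem _
  have hc : (fun j => (v j : ℚ) / a) ∈
      convexHull ℚ ((fun (t : Fin r → ℤ) j => (t j : ℚ)) '' ↑T) := by
    apply mem_convexHull_of_algebraMap_mem_convexHull (L := ℝ)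
    have hcast : algebraMap ℚ ℝ ∘ (fun j => (v j : ℚ) / a) = (a : ℝ)⁻¹ • toRealVec v := by
      funext j
      simp [toRealVec, div_eq_inv_mul]
    rw [image_image, funext algebraMap_comp_intCast_eq_toRealVec, ← Finset.coe_image, hcast,
      ← mem_smul_set_iff_inv_smul_mem₀ (by positivity)]
    simpa using hv
  obtain ⟨ι, _, μ, q, hμ0, hμ1, hq, hμq⟩ := mem_convexHull_iff_exists_fintype.mp hc
  choose t ht hqt using hq
  obtain ⟨D, hD, hk⟩ := exists_nat_mul_eq_natCast_of_nonneg hμ0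
  choose k hk using hk
  refine ⟨D, hD, ?_⟩
  rw [nsmul_mk_eq_sum_of_natCast_eq_mul hμ1 (t := t) (fun j => ?_) hk]
  · exact sum_mem fun i _ => nsmul_mem (AddSubmonoid.subset_closure (mem_image_of_mem _ (ht i))) _
  · have hμqj := congrFun hμq j
    simp only [Finset.sum_apply, Pi.smul_apply, smul_eq_mul, ← hqt] at hμqj
    rw [hμqj]
    field_simp

theorem saturation_gamma_image_eq_general (n r : ℕ) (P : Set (Fin n → ℝ))
    (hP : IsLatticePolytope P)
    (A : Matrix (Fin r) (Fin n) ℤ) :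
    {γ : ℤ × (Fin r → ℤ) | 0 ≤ γ.1 ∧ ∃ m : ℕ, 0 < m ∧
        (m : ℤ) • γ ∈ (fun γ : ℤ × (Fin n → ℤ) => (γ.1, A.mulVec γ.2)) '' GammaP P} =
      GammaP (realMap A '' P) := by
  have hPc := hP.isCompact
  have hPconv := hP.convex
  obtain ⟨S, hS, rfl⟩ := hP
  ext γ
  constructor
  · rintro ⟨-, m, hm, δ, hδ, hδγ⟩
    exact mem_GammaP_realMap_image hPc hPconv A hδ hm hδγ
  · intro hγ
    rw [realMap_image_convexHull] at hγ
    obtain ⟨m, hm, hmγ⟩ := exists_nsmul_mem_closure_of_mem_GammaP hγ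
    obtain ⟨δ, hδ, hδγ⟩ := closure_image_mulVec_subset_image_GammaP A hS hmγ
    exact ⟨hγ.1, m, hm, δ, hδ, by rw [natCast_zsmul, hδγ]⟩

/-- Let `P ⊆ ℝⁿ` be a lattice polytope of dimension `n` and
`π : ℝⁿ → ℝʳ` a lattice projection (induced by a surjective homomorphism `ℤⁿ → ℤʳ`
given by an integer matrix `A`). Let `Γ'` be the image of `Γ_P` under `id × π`.
Then the saturation of `Γ'`, namely
`{γ ∈ ℕ × ℤʳ : m·γ ∈ Γ' for some positive integer m}`, equals
`Γ_{π(P)} = Σ({1} × π(P)) ∩ (ℕ × ℤʳ)`. -/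
theorem saturation_gamma_image_eq (n r : ℕ) (P : Set (Fin n → ℝ))
    (hP : IsLatticePolytope P) (hdim : affineSpan ℝ P = ⊤)
    (A : Matrix (Fin r) (Fin n) ℤ)
    (hA : Surjective (A.mulVec : (Fin n → ℤ) → (Fin r → ℤ))) :
    {γ : ℤ × (Fin r → ℤ) | 0 ≤ γ.1 ∧ ∃ m : ℕ, 0 < m ∧
        (m : ℤ) • γ ∈ (fun γ : ℤ × (Fin n → ℤ) => (γ.1, A.mulVec γ.2)) '' GammaP P} =
      GammaP (realMap A '' P) :=
  saturation_gamma_image_eq_general n r P hP A
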